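/- Let M be a nonempty multiset of positive integers with sum k', cardinality c, and in which j occurs with multiplicity a_j. Then there exists a polynomial P over ℚ of degree c with leading coefficient 1/∏_j (a_j)! such that for every natural number n with n ≥ k' - 1, the number of subsets S of {0, 1, …, n-1} whose multiset of lengths of maximal runs equals M equals P(n). -/

import Mathlib

/-!
A set `T ⊆ {0, …, n}` either avoids `n`, or its last run is `[n + 1 - l, n]` for some `l ∈ M`,
preceded by the gap `n - l` and by a set `S ⊆ {0, …, n - l - 1}` with run lengths `M.erase l`.
This gives `runCount M (n + 1) = runCount M n + ∑ l, runCount (M.erase l) (n - l)`, which is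
solved by `M.countPerms * (n + 1 - k').choose c` (Pascal's rule together with
`∑ l, (M.erase l).countPerms = M.countPerms`). Finally `M.countPerms = c! / ∏ j, (a_j)!`, and
`c! * N.choose c` is the falling factorial `N (N - 1) ⋯ (N - c + 1)`, a polynomial in `n` as long
as `N = n + 1 - k'` is not truncated, i.e. for `n ≥ k' - 1`.
-/

/-- The multiset of lengths of the maximal runs (maximal sets of consecutive
integers) contained in a finite set `S` of natural numbers: for each `a ∈ S`
which starts a run (i.e. `a = 0` or `a - 1 ∉ S`), we record the length of the
run starting at `a`, namely the number of `x ≥ a` with `[a, x] ⊆ S`. -/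
def runLengths (S : Finset ℕ) : Multiset ℕ :=
  (S.filter fun a => a = 0 ∨ a - 1 ∉ S).val.map
    fun a => (S.filter fun x => a ≤ x ∧ Finset.Icc a x ⊆ S).card

open Finset Nat Polynomial

namespace Multiset

variable {α : Type*} [DecidableEq α] {m : Multiset α}

theorem countPerms_pos (m : Multiset α) : 0 < m.countPerms := Nat.multinomial_pos _ _

theorem prod_factorial_count_mul_countPerms (m : Multiset α) :
    (∏ a ∈ m.toFinset, (m.count a)!) * m.countPerms = m.card ! := by
  have h : m.countPerms = Nat.multinomial m.toFinset (m.count ·) := by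
    rw [countPerms, Finsupp.multinomial_eq, toFinsupp_support]
    exact Nat.multinomial_congr fun a _ => toFinsupp_apply m a
  rw [h, Nat.multinomial_spec, toFinset_sum_count_eq]

theorem count_mul_prod_factorial_count_erase {a : α} (ha : a ∈ m) :
    m.count a * ∏ b ∈ (m.erase a).toFinset, ((m.erase a).count b)! =
      ∏ b ∈ m.toFinset, (m.count b)! := by
  have hsub : (m.erase a).toFinset ⊆ m.toFinset := fun b hb =>
    mem_toFinset.mpr (mem_of_mem_erase (mem_toFinset.mp hb))
  rw [prod_subset hsub fun b _ hb => by rw [count_eq_zero.mpr (mt mem_toFinset.mpr hb),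
      factorial_zero],
    ← mul_prod_erase _ _ (mem_toFinset.mpr ha), ← mul_prod_erase _ _ (mem_toFinset.mpr ha),
    count_erase_self, ← mul_assoc, mul_factorial_pred (count_pos.mpr ha).ne']
  congr 1
  exact prod_congr rfl fun b hb => by rw [count_erase_of_ne (ne_of_mem_erase hb)]

theorem sum_countPerms_erase (hm : m ≠ 0) :
    ∑ a ∈ m.toFinset, (m.erase a).countPerms = m.countPerms := by
  have hF : 0 < ∏ a ∈ m.toFinset, (m.count a)! := by positivity
  set F : Multiset α → ℕ := fun m => ∏ a ∈ m.toFinset, (m.count a)!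
  refine Nat.eq_of_mul_eq_mul_left hF ?_
  calc F m * ∑ a ∈ m.toFinset, (m.erase a).countPerms
      = ∑ a ∈ m.toFinset, m.count a * (F (m.erase a) * (m.erase a).countPerms) := by
        rw [mul_sum]
        refine sum_congr rfl fun a ha => ?_
        rw [← mul_assoc, count_mul_prod_factorial_count_erase (mem_toFinset.mp ha)]
    _ = ∑ a ∈ m.toFinset, m.count a * (m.card - 1)! := by
        refine sum_congr rfl fun a ha => ?_
        rw [prod_factorial_count_mul_countPerms, card_erase_of_mem (mem_toFinset.mp ha)]
        rfl
    _ = F m * m.countPerms := by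
        rw [← sum_mul, toFinset_sum_count_eq, mul_factorial_pred (card_pos.mpr hm).ne',
          prod_factorial_count_mul_countPerms]

theorem card_le_sum_of_forall_pos {m : Multiset ℕ} (hpos : ∀ j ∈ m, 0 < j) : m.card ≤ m.sum := by
  simpa using card_nsmul_le_sum hpos

end Multiset

def runStarts (S : Finset ℕ) : Finset ℕ := S.filter fun a => a = 0 ∨ a - 1 ∉ S

def runLength (S : Finset ℕ) (a : ℕ) : ℕ := (S.filter fun x => a ≤ x ∧ Icc a x ⊆ S).card

theorem runLengths_empty : runLengths ∅ = 0 := rfl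

theorem runLengths_eq_map (S : Finset ℕ) :
    runLengths S = (runStarts S).val.map (runLength S) := rfl

variable {S : Finset ℕ} {a b : ℕ}

theorem runStarts_union_Icc (hS : ∀ x ∈ S, x + 2 ≤ a) (hab : a ≤ b) :
    runStarts (S ∪ Icc a b) = insert a (runStarts S) := by
  ext x
  simp only [runStarts, mem_filter, mem_insert, mem_union, mem_Icc]
  grind

theorem runLength_union_Icc_self (hS : ∀ x ∈ S, x + 2 ≤ a) :
    runLength (S ∪ Icc a b) a = b + 1 - a := by
  rw [runLength, ← Nat.card_Icc]
  congr 1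
  ext y
  simp only [mem_filter, mem_union, mem_Icc, subset_iff]
  grind

theorem runLength_union_Icc_of_mem (hS : ∀ x ∈ S, x + 2 ≤ a) {x : ℕ} (hx : x ∈ S) :
    runLength (S ∪ Icc a b) x = runLength S x := by
  rw [runLength, runLength]
  congr 1
  ext y
  simp only [mem_filter, mem_union, mem_Icc, subset_iff]
  constructor
  · rintro ⟨hy, hxy, hsub⟩
    -- `a - 1` is a gap, so a run starting in `S` cannot reach `Icc a b`
    have := @hsub (a - 1)
    grind
  · grind

theorem runLengths_union_Icc (hS : ∀ x ∈ S, x + 2 ≤ a) (hab : a ≤ b) :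
    runLengths (S ∪ Icc a b) = (b + 1 - a) ::ₘ runLengths S := by
  have ha : a ∉ runStarts S := fun h => by have := hS a (mem_filter.mp h).1; omega
  rw [runLengths_eq_map, runStarts_union_Icc hS hab, insert_val_of_notMem ha, Multiset.map_cons,
    runLength_union_Icc_self hS, runLengths_eq_map]
  exact congrArg _ (Multiset.map_congr rfl fun x hx =>
    runLength_union_Icc_of_mem hS (mem_filter.mp hx).1)

theorem exists_eq_union_Icc {T : Finset ℕ} {n : ℕ} (hT : T ⊆ range (n + 1)) (hn : n ∈ T) :
    ∃ a ≤ n, ∃ S : Finset ℕ, (∀ x ∈ S, x + 2 ≤ a) ∧ T = S ∪ Icc a n := by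
  have hex : ∃ a, Icc a n ⊆ T := ⟨n, by simpa⟩
  set a := Nat.find hex
  have hrun : Icc a n ⊆ T := Nat.find_spec hex
  have hstart : a = 0 ∨ a - 1 ∉ T := by
    refine or_iff_not_imp_left.mpr fun ha hmem => Nat.find_min hex (m := a - 1) (by omega) ?_
    intro x hx
    rcases eq_or_ne x (a - 1) with rfl | hne
    · exact hmem
    · exact hrun (by simp only [mem_Icc] at hx ⊢; omega)
  refine ⟨a, Nat.find_min' hex (by simpa), T.filter (· < a), fun x hx => ?_, ?_⟩
  · simp only [mem_filter] at hx
    grind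
  · ext x
    simp only [mem_union, mem_filter, mem_Icc]
    grind

theorem eq_and_eq_of_union_Icc_eq {S₁ S₂ : Finset ℕ} {a₁ a₂ n : ℕ} (h₁ : ∀ x ∈ S₁, x + 2 ≤ a₁)
    (h₂ : ∀ x ∈ S₂, x + 2 ≤ a₂) (ha₁ : a₁ ≤ n) (ha₂ : a₂ ≤ n)
    (h : S₁ ∪ Icc a₁ n = S₂ ∪ Icc a₂ n) : a₁ = a₂ ∧ S₁ = S₂ := by
  have key : ∀ x, x ∈ S₁ ∨ a₁ ≤ x ∧ x ≤ n ↔ x ∈ S₂ ∨ a₂ ≤ x ∧ x ≤ n := by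
    intro x; simpa using congrArg (x ∈ ·) h
  have ha : a₁ = a₂ := by
    have := key (a₁ - 1); have := key (a₂ - 1); have := h₁ (a₁ - 1); have := h₂ (a₂ - 1)
    grind
  subst ha
  refine ⟨rfl, ext fun x => ?_⟩
  grind

theorem subset_range_sub_iff {S : Finset ℕ} {l n : ℕ} (hl : l ≤ n + 1) :
    S ⊆ range (n - l) ↔ ∀ x ∈ S, x + 2 ≤ n + 1 - l := by
  simp only [subset_iff, mem_range]
  exact forall₂_congr fun x _ => by omega

def runCount (M : Multiset ℕ) (n : ℕ) : ℕ :=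
  ((range n).powerset.filter fun S => runLengths S = M).card

variable {M : Multiset ℕ}

theorem card_filter_notMem_eq_runCount (n : ℕ) :
    ((range (n + 1)).powerset.filter fun S => runLengths S = M ∧ n ∉ S).card = runCount M n := by
  rw [runCount]
  congr 1
  ext S
  simp only [mem_filter, mem_powerset, range_add_one]
  by_cases hn : n ∈ S
  · simpa [hn] using fun h => absurd (h hn) (by simp)
  · simp [hn, subset_insert_iff_of_notMem]

-- The term `l = n + 1`, where `n - l` truncates to `0`, counts `T = {0, …, n}`.
theorem card_filter_mem_eq_sum_runCount (hpos : ∀ j ∈ M, 0 < j) (n : ℕ) :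
    ((range (n + 1)).powerset.filter fun S => runLengths S = M ∧ n ∈ S).card =
      ∑ l ∈ M.toFinset.filter (· ≤ n + 1), runCount (M.erase l) (n - l) := by
  simp only [runCount, ← card_sigma]
  symm
  refine card_bij (fun p _ => p.2 ∪ Icc (n + 1 - p.1) n) ?_ ?_ ?_
  · rintro ⟨l, S⟩ hlS
    simp only [mem_sigma, mem_filter, Multiset.mem_toFinset, mem_powerset] at hlS ⊢
    obtain ⟨⟨hlM, hln⟩, hS, hSM⟩ := hlS
    have hl := hpos l hlM
    have hgap := (subset_range_sub_iff hln).mp hS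
    refine ⟨?_, ?_, ?_⟩
    · intro x hx
      simp only [mem_union, mem_Icc, mem_range] at hx ⊢
      grind
    · rw [runLengths_union_Icc hgap (by omega), hSM, show n + 1 - (n + 1 - l) = l by omega,
        Multiset.cons_erase hlM]
    · simp only [mem_union, mem_Icc]; omega
  · rintro ⟨l₁, S₁⟩ h₁ ⟨l₂, S₂⟩ h₂ h
    simp only [mem_sigma, mem_filter, Multiset.mem_toFinset, mem_powerset] at h₁ h₂
    have := hpos l₁ h₁.1.1
    have := hpos l₂ h₂.1.1
    obtain ⟨ha, hS⟩ := eq_and_eq_of_union_Icc_eq ((subset_range_sub_iff h₁.1.2).mp h₁.2.1)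
      ((subset_range_sub_iff h₂.1.2).mp h₂.2.1) (by omega) (by omega) h
    obtain rfl : l₁ = l₂ := by omega
    rw [hS]
  · intro T hT
    simp only [mem_filter, mem_powerset] at hT
    obtain ⟨hTn, hTM, hnT⟩ := hT
    obtain ⟨a, han, S, hgap, rfl⟩ := exists_eq_union_Icc hTn hnT
    have hM := runLengths_union_Icc hgap han
    rw [hTM] at hM
    refine ⟨⟨n + 1 - a, S⟩, ?_, by simp [show n + 1 - (n + 1 - a) = a by omega]⟩
    simp only [mem_sigma, mem_filter, Multiset.mem_toFinset, mem_powerset]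
    refine ⟨⟨by simp [hM], by omega⟩, (subset_range_sub_iff (by omega)).mpr ?_, by simp [hM]⟩
    rwa [show n + 1 - (n + 1 - a) = a by omega]

theorem runCount_succ (hpos : ∀ j ∈ M, 0 < j) (n : ℕ) :
    runCount M (n + 1) = runCount M n +
      ∑ l ∈ M.toFinset.filter (· ≤ n + 1), runCount (M.erase l) (n - l) := by
  rw [runCount, ← card_filter_add_card_filter_not (n ∈ ·), filter_filter, filter_filter,
    card_filter_mem_eq_sum_runCount hpos, card_filter_notMem_eq_runCount, add_comm]

theorem runCount_zero_right : runCount M 0 = if M = 0 then 1 else 0 := by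
  rw [runCount, range_zero, powerset_empty, filter_singleton, runLengths_empty]
  by_cases hM : M = 0 <;> simp [hM, eq_comm]

theorem choose_sum_erase_eq (hpos : ∀ j ∈ M, 0 < j) {l n : ℕ} (hl : l ∈ M) (hln : l ≤ n + 1) :
    (n - l + 1 - (M.erase l).sum).choose (M.erase l).card =
      (n + 1 - M.sum).choose (M.card - 1) := by
  have hsum := Multiset.sum_erase hl
  have hcard := Multiset.card_erase_add_one hl
  have hle := Multiset.card_le_sum_of_forall_pos (m := M.erase l)
    fun j hj => hpos j (Multiset.mem_of_mem_erase hj)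
  rcases Nat.eq_zero_or_pos (M.erase l).card with h0 | h0
  · rw [h0, show M.card - 1 = 0 by omega, Nat.choose_zero_right, Nat.choose_zero_right]
  · rw [show M.card - 1 = (M.erase l).card by omega]
    congr 1
    omega

theorem countPerms_mul_choose_succ (hpos : ∀ j ∈ M, 0 < j) (n : ℕ) :
    M.countPerms * (n + 2 - M.sum).choose M.card =
      M.countPerms * (n + 1 - M.sum).choose M.card +
        ∑ l ∈ M.toFinset.filter (· ≤ n + 1),
          (M.erase l).countPerms * (n - l + 1 - (M.erase l).sum).choose (M.erase l).card := by
  rcases eq_or_ne M 0 with rfl | hM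
  · simp
  have hc : 0 < M.card := Multiset.card_pos.mpr hM
  have hle : ∀ l ∈ M, l ≤ M.sum := fun l hl => Multiset.le_sum_of_mem hl
  rw [sum_congr rfl fun l hl => by
    rw [choose_sum_erase_eq hpos (Multiset.mem_toFinset.mp (mem_filter.mp hl).1)
      (mem_filter.mp hl).2]]
  rcases le_or_gt M.sum (n + 1) with hk | hk
  · rw [filter_true_of_mem fun l hl => (hle l (Multiset.mem_toFinset.mp hl)).trans hk,
      ← sum_mul, Multiset.sum_countPerms_erase hM, ← mul_add,
      show n + 2 - M.sum = n + 1 - M.sum + 1 by omega]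
    obtain ⟨c, hc'⟩ : ∃ c, M.card = c + 1 := ⟨M.card - 1, by omega⟩
    rw [hc', Nat.choose_succ_succ', add_tsub_cancel_right, add_comm]
  · have hcard : ∀ l ∈ M, l ≤ n + 1 → M.card - 1 ≠ 0 := fun l hl hln h => by
      have hsum := Multiset.sum_erase hl
      rw [Multiset.card_eq_zero.mp (show (M.erase l).card = 0 by
        have := Multiset.card_erase_add_one hl; omega), Multiset.sum_zero] at hsum
      omega
    have hterm : ∀ l ∈ M.toFinset.filter (· ≤ n + 1),
        (M.erase l).countPerms * (n + 1 - M.sum).choose (M.card - 1) = 0 := fun l hl => by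
      rw [mem_filter, Multiset.mem_toFinset] at hl
      rw [show n + 1 - M.sum = 0 by omega,
        Nat.choose_eq_zero_of_lt (Nat.pos_of_ne_zero (hcard l hl.1 hl.2)), mul_zero]
    rw [sum_eq_zero hterm, show n + 2 - M.sum = 0 by omega, show n + 1 - M.sum = 0 by omega,
      Nat.choose_eq_zero_of_lt hc, mul_zero, add_zero]

theorem runCount_eq (hpos : ∀ j ∈ M, 0 < j) (n : ℕ) :
    runCount M n = M.countPerms * (n + 1 - M.sum).choose M.card := by
  induction n using Nat.strong_induction_on generalizing M with
  | _ n ih =>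
  cases n with
  | zero =>
    rcases eq_or_ne M 0 with rfl | hM
    · simp [runCount_zero_right]
    · have := Multiset.card_le_sum_of_forall_pos hpos
      have := Multiset.card_pos.mpr hM
      rw [show 0 + 1 - M.sum = 0 by omega, Nat.choose_eq_zero_of_lt this, runCount_zero_right,
        if_neg hM, mul_zero]
  | succ n =>
    rw [runCount_succ hpos, ih n n.lt_add_one hpos, countPerms_mul_choose_succ hpos]
    congr 1
    refine sum_congr rfl fun l hl => ?_
    have hl := Multiset.mem_toFinset.mp (mem_filter.mp hl).1
    rw [ih (n - l) (by have := hpos l hl; omega)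
      fun j hj => hpos j (Multiset.mem_of_mem_erase hj)]

theorem exists_eval_add_eq_choose (c : ℕ) (r : ℚ) :
    ∃ P : ℚ[X], P.natDegree = c ∧ P.leadingCoeff = 1 / c ! ∧
      ∀ N : ℕ, P.eval (N + r) = N.choose c := by
  have hlin : (X - C r).natDegree = 1 := natDegree_X_sub_C r
  refine ⟨C (1 / c ! : ℚ) * (descPochhammer ℚ c).comp (X - C r), ?_, ?_, fun N => ?_⟩
  · rw [natDegree_C_mul (by positivity), natDegree_comp, descPochhammer_natDegree, hlin, mul_one]
  · rw [leadingCoeff_mul, leadingCoeff_C, ((monic_descPochhammer ℚ c).comp (monic_X_sub_C r)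
      (by rw [hlin]; exact one_ne_zero)).leadingCoeff, mul_one]
  · rw [eval_mul, eval_C, eval_comp, eval_sub, eval_X, eval_C, add_sub_cancel_right,
      Nat.cast_choose_eq_descPochhammer_div, one_div_mul_eq_div]

theorem statement3_general (M : Multiset ℕ) (hpos : ∀ j ∈ M, 0 < j)
    (k' c : ℕ) (hk' : k' = M.sum) (hc : c = M.card) :
    ∃ P : Polynomial ℚ, P.natDegree = c ∧
      P.leadingCoeff = 1 / ∏ j ∈ M.toFinset, ((M.count j).factorial : ℚ) ∧
      ∀ n : ℕ, k' - 1 ≤ n →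
        ((((Finset.range n).powerset.filter fun S => runLengths S = M).card : ℚ)) =
          P.eval (n : ℚ) := by
  subst hk' hc
  obtain ⟨P, hdeg, hlc, heval⟩ := exists_eval_add_eq_choose M.card ((M.sum : ℚ) - 1)
  have hcp : (M.countPerms : ℚ) ≠ 0 := by exact_mod_cast M.countPerms_pos.ne'
  refine ⟨C (M.countPerms : ℚ) * P, by rw [natDegree_C_mul hcp, hdeg], ?_, fun n hn => ?_⟩
  · have hspec := congrArg (Nat.cast (R := ℚ)) M.prod_factorial_count_mul_countPerms
    rw [Nat.cast_mul, Nat.cast_prod] at hspec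
    rw [leadingCoeff_mul, leadingCoeff_C, hlc, ← hspec]
    field_simp
  · change (runCount M n : ℚ) = _
    have hn' : (n : ℚ) = (n + 1 - M.sum : ℕ) + ((M.sum : ℚ) - 1) := by
      rw [Nat.cast_sub (by omega)]
      push_cast
      ring
    rw [runCount_eq hpos, eval_mul, eval_C, hn', heval, Nat.cast_mul]

/-- Let `M` be a nonempty multiset of positive integers with sum
`k'` and cardinality `c`, in which `j` occurs with multiplicity `a_j = M.count j`.
There is a polynomial `P` over `ℚ` of degree `c` with leading coefficient
`1 / ∏_j (a_j)!` such that for all `n ≥ k' - 1`, the number of subsets of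
`{0, …, n-1}` whose multiset of maximal run lengths is `M` equals `P(n)`. -/
theorem statement3 (M : Multiset ℕ) (hM : M ≠ 0) (hpos : ∀ j ∈ M, 0 < j)
    (k' c : ℕ) (hk' : k' = M.sum) (hc : c = M.card) :
    ∃ P : Polynomial ℚ, P.natDegree = c ∧
      P.leadingCoeff = 1 / ∏ j ∈ M.toFinset, ((M.count j).factorial : ℚ) ∧
      ∀ n : ℕ, k' - 1 ≤ n →
        ((((Finset.range n).powerset.filter fun S => runLengths S = M).card : ℚ)) =
          P.eval (n : ℚ) :=
  statement3_general M hpos k' c hk' hc
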